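/- Fefferman–de la Llave decomposition: for all distinct r, r' ∈ ℝ³, |r - r'|^{-1} = (1/π) ∫_0^∞ ∫_{ℝ³} B_{z,s}(r) B_{z,s}(r') dz ds/s⁵, where B_{z,s} is the characteristic function of the ball of radius s centered at z. -/

import Mathlib

/-!
The inner integral is the volume of the lens `ball r s ∩ ball r' s`. It depends only on
`d = dist r r'`, vanishes for `s ≤ d / 2`, and for `s ≥ d / 2` Cavalieri's principle (slicing
perpendicular to `r' - r` into discs) gives `π / 12 * (2 s - d)² * (4 s + d)`. Integrating this
against `s⁻⁵` over `(d / 2, ∞)` gives `π / d`.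
-/

open MeasureTheory

noncomputable section

abbrev E3 := EuclideanSpace ℝ (Fin 3)

open Metric Set Real

theorem volume_setOf_sq_add_sq_lt (c : ℝ) :
    volume {y : Fin 2 → ℝ | y 0 ^ 2 + y 1 ^ 2 < c} = ENNReal.ofReal (π * c) := by
  have hball : (MeasurableEquiv.toLp 2 (Fin 2 → ℝ)).symm ⁻¹' {y | y 0 ^ 2 + y 1 ^ 2 < c} =
      ball (0 : EuclideanSpace ℝ (Fin 2)) √c := by
    ext y
    rw [mem_ball_zero_iff, Real.lt_sqrt (norm_nonneg y), EuclideanSpace.norm_sq_eq]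
    simp [Fin.sum_univ_two]
  rw [← (EuclideanSpace.volume_preserving_symm_measurableEquiv_toLp (Fin 2)).measure_preimage_equiv,
    hball, EuclideanSpace.volume_ball_fin_two, ← ENNReal.ofReal_pow (Real.sqrt_nonneg c),
    Real.sq_sqrt', ← ENNReal.ofReal_mul (le_max_right c 0), mul_comm]
  rcases le_total 0 c with hc | hc
  · rw [max_eq_left hc]
  · rw [max_eq_right hc, mul_zero, ENNReal.ofReal_zero, eq_comm, ENNReal.ofReal_eq_zero]
    exact mul_nonpos_of_nonneg_of_nonpos pi_pos.le hc

theorem volume_ball_inter_ball_eq_of_dist_eq {E : Type*} [NormedAddCommGroup E]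
    [InnerProductSpace ℝ E] [FiniteDimensional ℝ E] [MeasurableSpace E] [BorelSpace E]
    {x y x' y' : E} (h : dist x y = dist x' y') (s s' : ℝ) :
    volume (ball x s ∩ ball y s') = volume (ball x' s ∩ ball y' s') := by
  obtain ⟨e, he⟩ : ∃ e : E ≃ₗᵢ[ℝ] E, e (y' - x') = y - x :=
    ⟨_, Submodule.reflection_sub (by rwa [← dist_eq_norm', ← dist_eq_norm', eq_comm])⟩
  set f : E → E := fun z => e (z - x') + x
  have hf : MeasurePreserving f volume volume :=
    (measurePreserving_add_right volume x).comp
      (e.measurePreserving.comp (measurePreserving_sub_right volume x'))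
  have hdist : ∀ z w, dist (f z) (f w) = dist z w := fun z w => by
    simp [f, dist_eq_norm, ← map_sub]
  have hx : f x' = x := by simp [f]
  have hy : f y' = y := by simp only [f, he, sub_add_cancel]
  have hpre : f ⁻¹' (ball x s ∩ ball y s') = ball x' s ∩ ball y' s' := by
    ext z
    simp only [mem_preimage, mem_inter_iff, mem_ball, ← hx, ← hy, hdist]
  rw [← hpre, hf.measure_preimage (measurableSet_ball.inter measurableSet_ball).nullMeasurableSet]

def lensVolume (d s : ℝ) : ℝ := π / 12 * (2 * s - d) ^ 2 * (4 * s + d)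

theorem lensVolume_nonneg {d s : ℝ} (hd : 0 ≤ d) (hs : 0 ≤ s) : 0 ≤ lensVolume d s := by
  unfold lensVolume; positivity

theorem integral_sq_sub_sq (a b s : ℝ) :
    ∫ t in a..b, (s ^ 2 - t ^ 2) = s ^ 2 * (b - a) - (b ^ 3 - a ^ 3) / 3 := by
  rw [intervalIntegral.integral_sub intervalIntegrable_const
    ((continuous_pow 2).intervalIntegrable _ _), integral_pow]
  simp only [intervalIntegral.integral_const, smul_eq_mul]
  ring

theorem integral_lens_section_area {d s : ℝ} (hd : 0 ≤ d) (hds : d ≤ 2 * s) :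
    ∫ t in Icc (d - s) s, π * (s ^ 2 - max (t ^ 2) ((t - d) ^ 2)) = lensVolume d s := by
  set g : ℝ → ℝ := fun t => π * (s ^ 2 - max (t ^ 2) ((t - d) ^ 2))
  have hg : Continuous g := by fun_prop
  rw [integral_Icc_eq_integral_Ioc, ← intervalIntegral.integral_of_le (by linarith),
    ← intervalIntegral.integral_add_adjacent_intervals (b := d / 2)
      (hg.intervalIntegrable _ _) (hg.intervalIntegrable _ _)]
  have hleft :
      ∫ t in (d - s)..(d / 2), g t = ∫ t in (d - s)..(d / 2), π * (s ^ 2 - (t - d) ^ 2) := by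
    refine intervalIntegral.integral_congr fun t ht => ?_
    rw [uIcc_of_le (by linarith), mem_Icc] at ht
    simp only [g, max_eq_right (by nlinarith : t ^ 2 ≤ (t - d) ^ 2)]
  have hright : ∫ t in (d / 2)..s, g t = ∫ t in (d / 2)..s, π * (s ^ 2 - t ^ 2) := by
    refine intervalIntegral.integral_congr fun t ht => ?_
    rw [uIcc_of_le (by linarith), mem_Icc] at ht
    simp only [g, max_eq_left (by nlinarith : (t - d) ^ 2 ≤ t ^ 2)]
  rw [hleft, hright, intervalIntegral.integral_const_mul, intervalIntegral.integral_const_mul,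
    intervalIntegral.integral_comp_sub_right (fun t => s ^ 2 - t ^ 2), integral_sq_sub_sq,
    integral_sq_sub_sq, lensVolume]
  ring

theorem volume_setOf_lens {d s : ℝ} (hd : 0 ≤ d) (hds : d ≤ 2 * s) :
    volume {x : Fin 3 → ℝ | x 0 ^ 2 + x 1 ^ 2 + x 2 ^ 2 < s ^ 2 ∧
        (x 0 - d) ^ 2 + x 1 ^ 2 + x 2 ^ 2 < s ^ 2} = ENNReal.ofReal (lensVolume d s) := by
  set T : Set (ℝ × (Fin 2 → ℝ)) := {p | p.1 ^ 2 + p.2 0 ^ 2 + p.2 1 ^ 2 < s ^ 2 ∧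
      (p.1 - d) ^ 2 + p.2 0 ^ 2 + p.2 1 ^ 2 < s ^ 2}
  have hT : MeasurableSet T := by
    simp only [T, ofPred_and]
    exact (measurableSet_lt (by fun_prop) measurable_const).inter
      (measurableSet_lt (by fun_prop) measurable_const)
  have hslice : ∀ t : ℝ, Prod.mk t ⁻¹' T =
      {y : Fin 2 → ℝ | y 0 ^ 2 + y 1 ^ 2 < s ^ 2 - max (t ^ 2) ((t - d) ^ 2)} := by
    intro t
    ext y
    simp only [T, mem_preimage, mem_ofPred_eq, lt_sub_iff_add_lt', ← max_add_add_right,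
      max_lt_iff]
    constructor <;> rintro ⟨h1, h2⟩ <;> constructor <;> linarith
  have hsupp : ∀ t ∉ Icc (d - s) s,
      ENNReal.ofReal (π * (s ^ 2 - max (t ^ 2) ((t - d) ^ 2))) = 0 := by
    intro t ht
    rw [ENNReal.ofReal_eq_zero]
    refine mul_nonpos_of_nonneg_of_nonpos pi_pos.le (sub_nonpos.mpr ?_)
    rcases not_and_or.mp ht with ht | ht
    · exact le_max_of_le_right (by nlinarith)
    · exact le_max_of_le_left (by nlinarith)
  calc volume {x : Fin 3 → ℝ | x 0 ^ 2 + x 1 ^ 2 + x 2 ^ 2 < s ^ 2 ∧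
        (x 0 - d) ^ 2 + x 1 ^ 2 + x 2 ^ 2 < s ^ 2}
      = volume (MeasurableEquiv.piFinSuccAbove (fun _ : Fin 3 => ℝ) 0 ⁻¹' T) := rfl
    _ = (volume.prod volume) T := by
      rw [volume_pi,
        (measurePreserving_piFinSuccAbove (fun _ => volume) 0).measure_preimage_equiv, ← volume_pi]
    _ = ∫⁻ t, ENNReal.ofReal (π * (s ^ 2 - max (t ^ 2) ((t - d) ^ 2))) := by
      simp only [Measure.prod_apply hT, hslice, volume_setOf_sq_add_sq_lt]
    _ = ∫⁻ t in Icc (d - s) s, ENNReal.ofReal (π * (s ^ 2 - max (t ^ 2) ((t - d) ^ 2))) :=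
      (setLIntegral_eq_of_support_subset fun t ht => by_contra fun h => ht (hsupp t h)).symm
    _ = ENNReal.ofReal (lensVolume d s) := by
      rw [← ofReal_integral_eq_lintegral_ofReal, integral_lens_section_area hd hds]
      · exact (by fun_prop : Continuous _).integrableOn_Icc
      · refine ae_restrict_of_forall_mem measurableSet_Icc fun t ⟨ht₁, ht₂⟩ => ?_
        exact mul_nonneg pi_pos.le (sub_nonneg.mpr (max_le (by nlinarith) (by nlinarith)))

theorem volume_ball_inter_ball {r r' : E3} {s : ℝ} (h : dist r r' ≤ 2 * s) :
    volume (ball r s ∩ ball r' s) = ENNReal.ofReal (lensVolume (dist r r') s) := by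
  set d := dist r r'
  have hd : 0 ≤ d := dist_nonneg
  have hs : 0 ≤ s := by linarith
  have hball : ∀ (c y : E3), y ∈ ball c s ↔ ∑ i, (y i - c i) ^ 2 < s ^ 2 := fun c y => by
    rw [mem_ball, dist_eq_norm, ← pow_lt_pow_iff_left₀ (norm_nonneg _) hs two_ne_zero,
      EuclideanSpace.norm_sq_eq]
    simp only [PiLp.sub_apply, Real.norm_eq_abs, sq_abs]
  have hpre : (MeasurableEquiv.toLp 2 (Fin 3 → ℝ)).symm ⁻¹'
      {x : Fin 3 → ℝ | x 0 ^ 2 + x 1 ^ 2 + x 2 ^ 2 < s ^ 2 ∧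
        (x 0 - d) ^ 2 + x 1 ^ 2 + x 2 ^ 2 < s ^ 2} =
      ball 0 s ∩ ball (EuclideanSpace.single 0 d) s := by
    ext y
    simp [hball, Fin.sum_univ_three]
  rw [volume_ball_inter_ball_eq_of_dist_eq (x' := 0) (y' := EuclideanSpace.single 0 d)
    (by simp [d, abs_of_nonneg hd]), ← hpre,
    (EuclideanSpace.volume_preserving_symm_measurableEquiv_toLp (Fin 3)).measure_preimage_equiv,
    volume_setOf_lens hd h]

theorem integral_lensVolume_div_pow_five {d : ℝ} (hd : 0 < d) :
    ∫ s in Ioi (d / 2), lensVolume d s / s ^ 5 = π / d := by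
  set F : ℝ → ℝ := fun s =>
    π / 12 * (-16 * s ^ (-1 : ℤ) + 6 * d * s ^ (-2 : ℤ) - d ^ 3 / 4 * s ^ (-4 : ℤ))
  have hF : ∀ s ≠ 0, HasDerivAt F (lensVolume d s / s ^ 5) s := fun s hs => by
    have H := ((((hasDerivAt_zpow (-1) s (Or.inl hs)).const_mul (-16 : ℝ)).add
      ((hasDerivAt_zpow (-2) s (Or.inl hs)).const_mul (6 * d))).sub
      ((hasDerivAt_zpow (-4) s (Or.inl hs)).const_mul (d ^ 3 / 4))).const_mul (π / 12)
    refine H.congr_deriv ?_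
    norm_num [lensVolume]
    field_simp
    ring
  have hFtop : Filter.Tendsto F Filter.atTop (nhds 0) := by
    have hz (n : ℤ) (hn : n < 0) := tendsto_zpow_atTop_zero (𝕜 := ℝ) hn
    simpa [F] using ((((hz (-1) (by norm_num)).const_mul (-16 : ℝ)).add
      ((hz (-2) (by norm_num)).const_mul (6 * d))).sub
      ((hz (-4) (by norm_num)).const_mul (d ^ 3 / 4))).const_mul (π / 12)
  have hd2 : 0 < d / 2 := by positivity
  rw [integral_Ioi_of_hasDerivAt_of_nonneg (hF _ hd2.ne').continuousAt.continuousWithinAt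
    (fun s hs => hF s (hd2.trans hs).ne')
    (fun s hs => div_nonneg (lensVolume_nonneg hd.le (hd2.trans hs).le)
      (pow_nonneg (hd2.trans hs).le 5)) hFtop]
  norm_num [F]
  field_simp
  ring

theorem integral_ite_dist_lt_mul_ite_dist_lt {X : Type*} [PseudoMetricSpace X]
    [MeasurableSpace X] [OpensMeasurableSpace X] (μ : Measure X) (x y : X) (s : ℝ) :
    ∫ z, (if dist x z < s then (1 : ℝ) else 0) * (if dist y z < s then (1 : ℝ) else 0) ∂μ =
      μ.real (ball x s ∩ ball y s) := by
  rw [← integral_indicator_one (measurableSet_ball.inter measurableSet_ball)]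
  congr 1 with z
  simp only [indicator, mem_inter_iff, mem_ball, dist_comm z, Pi.one_apply, ite_and, ite_mul,
    one_mul, zero_mul]

theorem fefferman_de_la_llave (r r' : E3) (h : r ≠ r') :
    (dist r r')⁻¹ =
      (1 / Real.pi) * ∫ s in Set.Ioi (0 : ℝ),
        (∫ z : E3, (if dist r z < s then (1 : ℝ) else 0) *
          (if dist r' z < s then (1 : ℝ) else 0)) / s ^ 5 := by
  have hd : 0 < dist r r' := dist_pos.mpr h
  have hintegrand : ∀ s, (∫ z : E3, (if dist r z < s then (1 : ℝ) else 0) *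
      (if dist r' z < s then (1 : ℝ) else 0)) / s ^ 5 =
      (Ioi (dist r r' / 2)).indicator (fun s => lensVolume (dist r r') s / s ^ 5) s := by
    intro s
    rw [integral_ite_dist_lt_mul_ite_dist_lt]
    by_cases hs : dist r r' < 2 * s
    · rw [indicator_of_mem (by rw [mem_Ioi]; linarith), measureReal_def,
        volume_ball_inter_ball hs.le, ENNReal.toReal_ofReal (lensVolume_nonneg hd.le (by linarith))]
    · rw [indicator_of_notMem (by rw [mem_Ioi]; linarith),
        (ball_disjoint_ball (by linarith)).inter_eq, measureReal_empty, zero_div]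
  rw [setIntegral_congr_fun measurableSet_Ioi fun s _ => hintegrand s,
    setIntegral_indicator measurableSet_Ioi, Ioi_inter_Ioi, max_eq_right (by positivity),
    integral_lensVolume_div_pow_five hd]
  field_simp

end
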